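/- arXiv:1710.10066 — 2 statements merged into one kernel-verified Lean document; each statement's English description precedes it below -/
import Mathlib

section
/- Let K ⊆ [0,1] and K' ⊆ [0,s₀] be attractors of iterated function systems {f_a}_{a∈𝒜} and {f'_{a'}}_{a'∈𝒜'} of contracting similarities with the same ratio ρ ∈ (0,1), each with con(K)=[0,1] and con(K')=[0,s₀]. For u ∈ ℝ (representing a relative configuration) define the renormalization operators T_a T'_{a'}(u) as the relative position of f_a applied to K and f'_{a'} applied to K'+u, rescaled by ρ^{-1}. Then u ∈ K − K' if and only if there exists M > 0 and sequences a_i ∈ 𝒜, a'_i ∈ 𝒜' such that the iterates u₀ = u, u_i = T_{a_i} T'_{a'_i}(u_{i−1}) satisfy |u_i| < M for all i ≥ 0. -/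
/-!
Writing `x = ρ z + e a` and `y = ρ z' + e' a'` with `z ∈ K`, `z' ∈ K'` gives
`renorm a a' (x - y) = z - z' ∈ K - K'`, so every point of `K - K'` has an orbit inside the
bounded set `K - K'`. Conversely, unrolling `u_{i-1} = ρ u_i + e (a_i) - e' (a'_i)` gives
`u = ρⁿ uₙ + ∑_{i<n} ρⁱ (e (a_{i+1}) - e' (a'_{i+1}))`; boundedness kills the first term, and
the two series converge to points of `K` and `K'` because their partial sums are iterates of the
IFS at `0`.
-/

open Filter Finset Topology
open scoped Pointwise

/-- Renormalization operator on relative configurations: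
`T_a T'_{a'}(u) = ρ⁻¹ (u + e' a' - e a)` where `e a` (resp. `e' a'`) is the translation
part of the similarity `f_a x = ρ x + e a` (resp. `f'_{a'} x = ρ x + e' a'`). -/
noncomputable def renorm (ρ : ℝ) {𝒜 𝒜' : Type*} (e : 𝒜 → ℝ) (e' : 𝒜' → ℝ)
    (a : 𝒜) (a' : 𝒜') (u : ℝ) : ℝ :=
  ρ⁻¹ * (u + e' a' - e a)

lemma exists_orbit_mem_of_forall_exists_mem {α β : Type*} (f : α → β → β) {S : Set β}
    (hS : ∀ w ∈ S, ∃ b, f b w ∈ S) {w : β} (hw : w ∈ S) :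
    ∃ (b : ℕ → α) (v : ℕ → β), v 0 = w ∧ (∀ i, v (i + 1) = f (b (i + 1)) (v i)) ∧
      ∀ i, v i ∈ S := by
  choose g hg using hS
  let v : ℕ → S := fun n => Nat.rec ⟨w, hw⟩ (fun _ p => ⟨f (g p.1 p.2) p.1, hg p.1 p.2⟩) n
  -- `b 0` never enters the recursion; with truncated subtraction it is just `b 1`.
  exact ⟨fun n => g (v (n - 1)).1 (v (n - 1)).2, fun n => (v n).1, rfl, fun _ => rfl,
    fun n => (v n).2⟩

section Attractor

variable {𝒜 : Type*} {ρ : ℝ} {e : 𝒜 → ℝ} {K : Set ℝ}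

lemma exists_eq_affine_of_mem_attractor (hK : K = ⋃ a, (fun x => ρ * x + e a) '' K) {x : ℝ}
    (hx : x ∈ K) : ∃ a, ∃ z ∈ K, x = ρ * z + e a := by
  rw [hK] at hx
  obtain ⟨a, z, hz, rfl⟩ := Set.mem_iUnion.1 hx
  exact ⟨a, z, hz, rfl⟩

lemma affine_mem_attractor (hK : K = ⋃ a, (fun x => ρ * x + e a) '' K) {x : ℝ} (hx : x ∈ K)
    (a : 𝒜) : ρ * x + e a ∈ K := by
  rw [hK]
  exact Set.mem_iUnion.2 ⟨a, x, hx, rfl⟩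

lemma sum_range_pow_mul_mem_attractor (hK : K = ⋃ a, (fun x => ρ * x + e a) '' K)
    (h0 : (0 : ℝ) ∈ K) (n : ℕ) (b : ℕ → 𝒜) : ∑ i ∈ range n, ρ ^ i * e (b i) ∈ K := by
  induction n generalizing b with
  | zero => simpa using h0
  | succ n ih =>
    have hshift : ∑ i ∈ range (n + 1), ρ ^ i * e (b i)
        = ρ * ∑ i ∈ range n, ρ ^ i * e (b (i + 1)) + e (b 0) := by
      rw [sum_range_succ', mul_sum]
      simp only [pow_succ', mul_assoc, pow_zero, one_mul]
    rw [hshift]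
    exact affine_mem_attractor hK (ih _) (b 0)

lemma exists_hasSum_pow_mul_mem_attractor (hρ : 0 ≤ ρ) (hρ1 : ρ < 1) (hKc : IsCompact K)
    (hK : K = ⋃ a, (fun x => ρ * x + e a) '' K) (h0 : (0 : ℝ) ∈ K) (b : ℕ → 𝒜) :
    ∃ x ∈ K, HasSum (fun i => ρ ^ i * e (b i)) x := by
  obtain ⟨C, hC⟩ := isBounded_iff_forall_norm_le.1 hKc.isBounded
  -- `e a = ρ * 0 + e a ∈ K`
  have he : ∀ a, ‖e a‖ ≤ C := fun a => hC _ (by simpa using affine_mem_attractor hK h0 a)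
  have hsum : Summable fun i => ρ ^ i * e (b i) := by
    refine Summable.of_norm_bounded ((summable_geometric_of_lt_one hρ hρ1).mul_left C) fun i => ?_
    rw [norm_mul, norm_pow, Real.norm_of_nonneg hρ, mul_comm]
    exact mul_le_mul_of_nonneg_right (he _) (pow_nonneg hρ i)
  exact ⟨_, hKc.isClosed.mem_of_tendsto hsum.hasSum.tendsto_sum_nat
    (Eventually.of_forall fun n => sum_range_pow_mul_mem_attractor hK h0 n b), hsum.hasSum⟩

end Attractor

section Renorm

variable {𝒜 𝒜' : Type*} {ρ : ℝ} {e : 𝒜 → ℝ} {e' : 𝒜' → ℝ}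

lemma renorm_sub_affine (hρ : ρ ≠ 0) (a : 𝒜) (a' : 𝒜') (x y : ℝ) :
    renorm ρ e e' a a' ((ρ * x + e a) - (ρ * y + e' a')) = x - y := by
  rw [renorm]
  field_simp
  ring

lemma exists_renorm_mem_sub {K K' : Set ℝ} (hK : K = ⋃ a, (fun x => ρ * x + e a) '' K)
    (hK' : K' = ⋃ a', (fun x => ρ * x + e' a') '' K') (hρ : ρ ≠ 0) {w : ℝ} (hw : w ∈ K - K') :
    ∃ p : 𝒜 × 𝒜', renorm ρ e e' p.1 p.2 w ∈ K - K' := by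
  obtain ⟨x, hx, y, hy, rfl⟩ := hw
  obtain ⟨a, z, hz, rfl⟩ := exists_eq_affine_of_mem_attractor hK hx
  obtain ⟨a', z', hz', rfl⟩ := exists_eq_affine_of_mem_attractor hK' hy
  exact ⟨(a, a'), by rw [renorm_sub_affine hρ]; exact Set.sub_mem_sub hz hz'⟩

lemma eq_pow_mul_add_sum_of_renorm (hρ : ρ ≠ 0) {a : ℕ → 𝒜} {a' : ℕ → 𝒜'} {v : ℕ → ℝ}
    (hv : ∀ i, v (i + 1) = renorm ρ e e' (a (i + 1)) (a' (i + 1)) (v i)) (n : ℕ) :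
    v 0 = ρ ^ n * v n + ∑ i ∈ range n, ρ ^ i * (e (a (i + 1)) - e' (a' (i + 1))) := by
  induction n with
  | zero => simp
  | succ n ih =>
    have hstep : v n = ρ * v (n + 1) + e (a (n + 1)) - e' (a' (n + 1)) := by
      rw [hv, renorm]
      field_simp
      ring
    rw [ih, hstep, sum_range_succ]
    ring

lemma exists_bounded_renorm_orbit_of_mem_sub {K K' : Set ℝ} (hKc : IsCompact K)
    (hK'c : IsCompact K') (hK : K = ⋃ a, (fun x => ρ * x + e a) '' K)
    (hK' : K' = ⋃ a', (fun x => ρ * x + e' a') '' K') (hρ : ρ ≠ 0) {u : ℝ} (hu : u ∈ K - K') :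
    ∃ M > (0 : ℝ), ∃ (a : ℕ → 𝒜) (a' : ℕ → 𝒜') (v : ℕ → ℝ),
      v 0 = u ∧ (∀ i, v (i + 1) = renorm ρ e e' (a (i + 1)) (a' (i + 1)) (v i)) ∧
        ∀ i, |v i| < M := by
  obtain ⟨C, hC⟩ := isBounded_iff_forall_norm_le.1 (hKc.isBounded.sub hK'c.isBounded)
  obtain ⟨p, v, hv0, hv, hvK⟩ := exists_orbit_mem_of_forall_exists_mem
    (fun p : 𝒜 × 𝒜' => renorm ρ e e' p.1 p.2)
    (fun w hw => exists_renorm_mem_sub hK hK' hρ hw) hu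
  exact ⟨|C| + 1, by positivity, fun i => (p i).1, fun i => (p i).2, v, hv0, hv,
    fun i => (hC _ (hvK i)).trans_lt (by linarith [le_abs_self C])⟩

lemma mem_sub_of_bounded_renorm_orbit {K K' : Set ℝ} (hρ : 0 < ρ) (hρ1 : ρ < 1)
    (hKc : IsCompact K) (hK'c : IsCompact K') (hK : K = ⋃ a, (fun x => ρ * x + e a) '' K)
    (hK' : K' = ⋃ a', (fun x => ρ * x + e' a') '' K') (h0K : (0 : ℝ) ∈ K) (h0K' : (0 : ℝ) ∈ K')
    {M : ℝ} {a : ℕ → 𝒜} {a' : ℕ → 𝒜'} {v : ℕ → ℝ}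
    (hv : ∀ i, v (i + 1) = renorm ρ e e' (a (i + 1)) (a' (i + 1)) (v i)) (hvM : ∀ i, |v i| < M) :
    v 0 ∈ K - K' := by
  obtain ⟨x, hx, hxsum⟩ :=
    exists_hasSum_pow_mul_mem_attractor hρ.le hρ1 hKc hK h0K fun i => a (i + 1)
  obtain ⟨y, hy, hysum⟩ :=
    exists_hasSum_pow_mul_mem_attractor hρ.le hρ1 hK'c hK' h0K' fun i => a' (i + 1)
  have htail : Tendsto (fun n => ρ ^ n * v n) atTop (𝓝 0) := by
    refine squeeze_zero_norm (fun n => ?_)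
      (by simpa using (tendsto_pow_atTop_nhds_zero_of_lt_one hρ.le hρ1).mul_const M)
    rw [norm_mul, norm_pow, Real.norm_of_nonneg hρ.le]
    exact mul_le_mul_of_nonneg_left (hvM n).le (pow_nonneg hρ.le n)
  have hpartial : Tendsto (fun n => v 0 - ρ ^ n * v n) atTop (𝓝 (x - y)) := by
    refine (hxsum.sub hysum).tendsto_sum_nat.congr fun n => ?_
    rw [eq_pow_mul_add_sum_of_renorm hρ.ne' hv n]
    simp only [mul_sub, add_sub_cancel_left]
  have hv0 : v 0 = x - y :=
    tendsto_nhds_unique (by simpa using tendsto_const_nhds.sub htail) hpartial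
  exact hv0 ▸ Set.sub_mem_sub hx hy

end Renorm

theorem stmt_9_general {𝒜 𝒜' : Type*}
    (ρ : ℝ) (hρ : 0 < ρ) (hρ1 : ρ < 1)
    (e : 𝒜 → ℝ) (e' : 𝒜' → ℝ) (K K' : Set ℝ)
    (hKc : IsCompact K) (hK'c : IsCompact K')
    -- K, K' are the attractors of the IFSs {x ↦ ρ x + e a}, {x ↦ ρ x + e' a'}
    (hK : K = ⋃ a : 𝒜, (fun x => ρ * x + e a) '' K)
    (hK' : K' = ⋃ a' : 𝒜', (fun x => ρ * x + e' a') '' K')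
    (h0K : (0 : ℝ) ∈ K)
    (h0K' : (0 : ℝ) ∈ K')
    (u : ℝ) :
    u ∈ Set.image2 (· - ·) K K' ↔
      ∃ M > (0 : ℝ), ∃ (a : ℕ → 𝒜) (a' : ℕ → 𝒜') (v : ℕ → ℝ),
        v 0 = u ∧ (∀ i, v (i + 1) = renorm ρ e e' (a (i + 1)) (a' (i + 1)) (v i)) ∧
          ∀ i, |v i| < M := by
  rw [Set.image2_sub]
  refine ⟨exists_bounded_renorm_orbit_of_mem_sub hKc hK'c hK hK' hρ.ne', ?_⟩
  rintro ⟨M, -, a, a', v, rfl, hv, hvM⟩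
  exact mem_sub_of_bounded_renorm_orbit hρ hρ1 hKc hK'c hK hK' h0K h0K' hv hvM

theorem stmt_9 {𝒜 𝒜' : Type*} [Finite 𝒜] [Finite 𝒜'] [Nonempty 𝒜] [Nonempty 𝒜']
    (ρ : ℝ) (hρ : 0 < ρ) (hρ1 : ρ < 1) (s₀ : ℝ) (hs₀ : 0 < s₀)
    (e : 𝒜 → ℝ) (e' : 𝒜' → ℝ) (K K' : Set ℝ)
    (hKc : IsCompact K) (hK'c : IsCompact K')
    -- K, K' are the attractors of the IFSs {x ↦ ρ x + e a}, {x ↦ ρ x + e' a'}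
    (hK : K = ⋃ a : 𝒜, (fun x => ρ * x + e a) '' K)
    (hK' : K' = ⋃ a' : 𝒜', (fun x => ρ * x + e' a') '' K')
    -- con(K) = [0,1], con(K') = [0,s₀]
    (hKsub : K ⊆ Set.Icc 0 1) (h0K : (0 : ℝ) ∈ K) (h1K : (1 : ℝ) ∈ K)
    (hK'sub : K' ⊆ Set.Icc 0 s₀) (h0K' : (0 : ℝ) ∈ K') (hsK' : s₀ ∈ K')
    -- the images of the convex hulls are pairwise disjoint
    (hdisj : Pairwise (fun a b : 𝒜 =>
      Disjoint ((fun x => ρ * x + e a) '' Set.Icc 0 1) ((fun x => ρ * x + e b) '' Set.Icc 0 1)))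
    (hdisj' : Pairwise (fun a' b' : 𝒜' =>
      Disjoint ((fun x => ρ * x + e' a') '' Set.Icc 0 s₀)
        ((fun x => ρ * x + e' b') '' Set.Icc 0 s₀)))
    (u : ℝ) :
    u ∈ Set.image2 (· - ·) K K' ↔
      ∃ M > (0 : ℝ), ∃ (a : ℕ → 𝒜) (a' : ℕ → 𝒜') (v : ℕ → ℝ),
        v 0 = u ∧ (∀ i, v (i + 1) = renorm ρ e e' (a (i + 1)) (a' (i + 1)) (v i)) ∧
          ∀ i, |v i| < M :=
  stmt_9_general ρ hρ hρ1 e e' K K' hKc hK'c hK hK' h0K h0K' u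
end

section
/- Let K, K' be homogeneous Cantor sets with alphabets 𝒜, 𝒜' and renormalization operators T_a T'_{a'} acting on ℝ (the space of relative configurations). Suppose ℒ ⊆ ℝ is a nonempty compact set such that for every u ∈ ℒ there exist a ∈ 𝒜, a' ∈ 𝒜' with T_a T'_{a'}(u) ∈ int(ℒ). Then every u ∈ ℒ is intersecting, i.e., ℒ ⊆ K − K'. In particular, if a recurrent set contains an interval, then K − K' contains an interval. -/
theorem stmt_10 {𝒜 𝒜' : Type*} [Finite 𝒜] [Finite 𝒜'] [Nonempty 𝒜] [Nonempty 𝒜']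
    (ρ : ℝ) (hρ : 0 < ρ) (hρ1 : ρ < 1) (s₀ : ℝ) (hs₀ : 0 < s₀)
    (e : 𝒜 → ℝ) (e' : 𝒜' → ℝ) (K K' : Set ℝ)
    (hKc : IsCompact K) (hK'c : IsCompact K')
    (hK : K = ⋃ a : 𝒜, (fun x => ρ * x + e a) '' K)
    (hK' : K' = ⋃ a' : 𝒜', (fun x => ρ * x + e' a') '' K')
    (hKsub : K ⊆ Set.Icc 0 1) (h0K : (0 : ℝ) ∈ K) (h1K : (1 : ℝ) ∈ K)
    (hK'sub : K' ⊆ Set.Icc 0 s₀) (h0K' : (0 : ℝ) ∈ K') (hsK' : s₀ ∈ K')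
    (hdisj : Pairwise (fun a b : 𝒜 =>
      Disjoint ((fun x => ρ * x + e a) '' Set.Icc 0 1) ((fun x => ρ * x + e b) '' Set.Icc 0 1)))
    (hdisj' : Pairwise (fun a' b' : 𝒜' =>
      Disjoint ((fun x => ρ * x + e' a') '' Set.Icc 0 s₀)
        ((fun x => ρ * x + e' b') '' Set.Icc 0 s₀)))
    -- ℒ is a recurrent set
    (ℒ : Set ℝ) (hℒne : ℒ.Nonempty) (hℒc : IsCompact ℒ)
    (hrec : ∀ u ∈ ℒ, ∃ (a : 𝒜) (a' : 𝒜'), renorm ρ e e' a a' u ∈ interior ℒ) :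
    ℒ ⊆ Set.image2 (· - ·) K K' ∧
      ∀ a b : ℝ, a < b → Set.Icc a b ⊆ ℒ → Set.Icc a b ⊆ Set.image2 (· - ·) K K' := by
  have hρne : ρ ≠ 0 := ne_of_gt hρ
  -- K is invariant under each map, likewise K'
  have hKinv : ∀ (a : 𝒜) (z : ℝ), z ∈ K → ρ * z + e a ∈ K := by
    intro a z hz
    have : ρ * z + e a ∈ ⋃ a : 𝒜, (fun x => ρ * x + e a) '' K :=
      Set.mem_iUnion.mpr ⟨a, Set.mem_image_of_mem _ hz⟩
    rwa [← hK] at this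
  have hK'inv : ∀ (a' : 𝒜') (z : ℝ), z ∈ K' → ρ * z + e' a' ∈ K' := by
    intro a' z hz
    have : ρ * z + e' a' ∈ ⋃ a' : 𝒜', (fun x => ρ * x + e' a') '' K' :=
      Set.mem_iUnion.mpr ⟨a', Set.mem_image_of_mem _ hz⟩
    rwa [← hK'] at this
  -- the difference set is closed
  have hDc : IsCompact (Set.image2 (· - ·) K K') := by
    rw [← Set.image_prod]
    exact (hKc.prod hK'c).image (continuous_fst.sub continuous_snd)
  have hDclosed : IsClosed (Set.image2 (· - ·) K K') := hDc.isClosed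
  -- bound on ℒ
  obtain ⟨M, hM⟩ := (hℒc.isBounded).subset_closedBall 0
  have hMbd : ∀ v ∈ ℒ, |v| ≤ M := by
    intro v hv
    have := hM hv
    simpa [Metric.mem_closedBall, Real.dist_eq] using this
  have hmain : ℒ ⊆ Set.image2 (· - ·) K K' := by
    intro u hu
    have hrec' : ∀ v : ℝ, v ∈ ℒ → ∃ p : 𝒜 × 𝒜', renorm ρ e e' p.1 p.2 v ∈ ℒ := by
      intro v hv
      obtain ⟨a, a', h⟩ := hrec v hv
      exact ⟨(a, a'), interior_subset h⟩
    choose! P hP using hrec'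
    let step : {v : ℝ // v ∈ ℒ} → {v : ℝ // v ∈ ℒ} :=
      fun v => ⟨renorm ρ e e' (P v.1).1 (P v.1).2 v.1, hP v.1 v.2⟩
    let seq : ℕ → {v : ℝ // v ∈ ℒ} := fun n => step^[n] ⟨u, hu⟩
    set v : ℕ → ℝ := fun n => (seq n).1 with hv
    have hv0 : v 0 = u := rfl
    have hvmem : ∀ n, v n ∈ ℒ := fun n => (seq n).2
    have hrecur : ∀ n, v n = ρ * v (n + 1) +
        e (P (v n)).1 - e' (P (v n)).2 := by
      intro n
      have hs : seq (n + 1) = step (seq n) := Function.iterate_succ_apply' _ _ _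
      have : v (n + 1) = ρ⁻¹ * (v n + e' (P (v n)).2 - e (P (v n)).1) := by
        show (seq (n+1)).1 = _
        rw [hs]
        rfl
      field_simp at this
      linarith [this]
    -- main induction
    have key : ∀ n : ℕ, ∃ x y : ℝ,
        (∀ z ∈ K, x + ρ ^ n * z ∈ K) ∧ (∀ z ∈ K', y + ρ ^ n * z ∈ K') ∧
          u = x - y + ρ ^ n * v n := by
      intro n
      induction n with
      | zero => exact ⟨0, 0, by simp, by simp, by simp [hv0]⟩
      | succ n ih =>
        obtain ⟨x, y, hx, hy, heq⟩ := ih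
        set A := e (P (v n)).1 with hA
        set B := e' (P (v n)).2 with hB
        have h := hrecur n
        refine ⟨x + ρ ^ n * A, y + ρ ^ n * B, ?_, ?_, ?_⟩
        · intro z hz
          have := hx _ (hKinv (P (v n)).1 z hz)
          rw [← hA] at this
          convert this using 1
          ring
        · intro z hz
          have := hy _ (hK'inv (P (v n)).2 z hz)
          rw [← hB] at this
          convert this using 1
          ring
        · rw [heq, h]
          ring
    choose X Y hX hY hEq using key
    have hXK : ∀ n, X n ∈ K := by
      intro n
      have := hX n 0 h0K
      simpa using this
    have hYK : ∀ n, Y n ∈ K' := by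
      intro n
      have := hY n 0 h0K'
      simpa using this
    have hdmem : ∀ n, X n - Y n ∈ Set.image2 (· - ·) K K' := fun n =>
      Set.mem_image2_of_mem (hXK n) (hYK n)
    have htend : Filter.Tendsto (fun n => X n - Y n) Filter.atTop (nhds u) := by
      rw [tendsto_iff_dist_tendsto_zero]
      apply squeeze_zero (fun n => dist_nonneg) (g := fun n => M * ρ ^ n)
      · intro n
        have : dist (X n - Y n) u = ρ ^ n * |v n| := by
          rw [Real.dist_eq]
          have : X n - Y n - u = -(ρ ^ n * v n) := by
            have := hEq n; linarith
          rw [this, abs_neg, abs_mul, abs_of_nonneg (pow_nonneg hρ.le n)]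
        rw [this]
        calc ρ ^ n * |v n| ≤ ρ ^ n * M :=
              mul_le_mul_of_nonneg_left (hMbd _ (hvmem n)) (pow_nonneg hρ.le n)
          _ = M * ρ ^ n := by ring
      · have : Filter.Tendsto (fun n : ℕ => ρ ^ n) Filter.atTop (nhds 0) :=
          tendsto_pow_atTop_nhds_zero_of_lt_one hρ.le hρ1
        simpa using this.const_mul M
    exact hDclosed.mem_of_tendsto htend (Filter.Eventually.of_forall hdmem)
  exact ⟨hmain, fun a b _ hsub => hsub.trans hmain⟩
end
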